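/- Let X, Y, Z be vector fields on a smooth manifold satisfying [X,Y] = Z, [X,Z] = −ρ₁Y, [Y,Z] = ρ₁X for a constant ρ₁, with Γ(f) = (Xf)² + (Yf)² and Γ^Z(f) = (Zf)². Then for every smooth f: Γ(f, Γ^Z(f)) = Γ^Z(f, Γ(f)), where Γ(f,g) = (Xf)(Xg) + (Yf)(Yg) and Γ^Z(f,g) = (Zf)(Zg). -/

import Mathlib

/-! The Leibniz rule turns both sides into `2 Zf` times `Xf·X(Zf) + Yf·Y(Zf)`, respectively
`Xf·Z(Xf) + Yf·Z(Yf)`. These agree because, by the bracket relations `[X,Z] = −ρ₁Y` and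
`[Y,Z] = ρ₁X`, their difference is `−ρ₁ (Xf)(Yf) + ρ₁ (Yf)(Xf) = 0`: the vector field `Z` acts on
the pair `(X, Y)` as an infinitesimal rotation, which preserves `Γ`. -/

theorem map_mul_self_of_leibniz {A : Type*} [CommRing A] (D : A → A)
    (hD : ∀ f g : A, D (f * g) = f * D g + g * D f) (f : A) :
    D (f * f) = 2 * f * D f := by
  rw [hD]; ring

theorem mul_map_add_mul_map_eq_of_bracket_rotation {R A : Type*} [CommRing R] [CommRing A]
    [Algebra R A] (ρ : R) (X Y Z : A → A) (f : A)
    (hXZ : X (Z f) - Z (X f) = -ρ • Y f) (hYZ : Y (Z f) - Z (Y f) = ρ • X f) :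
    X f * X (Z f) + Y f * Y (Z f) = X f * Z (X f) + Y f * Z (Y f) := by
  rw [Algebra.smul_def, map_neg] at hXZ
  rw [Algebra.smul_def] at hYZ
  linear_combination X f * hXZ + Y f * hYZ

theorem gamma_gammaZ_commute_general {M : Type*} (ρ₁ : ℝ)
    (X Y Z : (M → ℝ) →ₗ[ℝ] (M → ℝ))
    (hX : ∀ f g : M → ℝ, X (f * g) = f * X g + g * X f)
    (hY : ∀ f g : M → ℝ, Y (f * g) = f * Y g + g * Y f)
    (hZ : ∀ f g : M → ℝ, Z (f * g) = f * Z g + g * Z f)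
    (hXZ : ∀ f : M → ℝ, X (Z f) - Z (X f) = -ρ₁ • Y f)
    (hYZ : ∀ f : M → ℝ, Y (Z f) - Z (Y f) = ρ₁ • X f)
    (f : M → ℝ) :
    X f * X (Z f * Z f) + Y f * Y (Z f * Z f) =
      Z f * Z (X f * X f + Y f * Y f) :=
  calc X f * X (Z f * Z f) + Y f * Y (Z f * Z f)
      = 2 * Z f * (X f * X (Z f) + Y f * Y (Z f)) := by
        rw [map_mul_self_of_leibniz X hX, map_mul_self_of_leibniz Y hY]; ring
    _ = 2 * Z f * (X f * Z (X f) + Y f * Z (Y f)) := by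
        rw [mul_map_add_mul_map_eq_of_bracket_rotation ρ₁ X Y Z f (hXZ f) (hYZ f)]
    _ = Z f * Z (X f * X f + Y f * Y f) := by
        rw [map_add, map_mul_self_of_leibniz Z hZ, map_mul_self_of_leibniz Z hZ]; ring

/-- Verification of the commutation hypothesis `Γ(f, Γ^Z(f)) = Γ^Z(f, Γ(f))` for
the three-dimensional model spaces `G(ρ₁)`: `X, Y, Z` are derivations with
`[X,Y] = Z`, `[X,Z] = −ρ₁ Y`, `[Y,Z] = ρ₁ X`, and
`Γ(f,g) = (Xf)(Xg) + (Yf)(Yg)`, `Γ^Z(f,g) = (Zf)(Zg)`. -/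
theorem gamma_gammaZ_commute {M : Type*} (ρ₁ : ℝ)
    (X Y Z : (M → ℝ) →ₗ[ℝ] (M → ℝ))
    (hX : ∀ f g : M → ℝ, X (f * g) = f * X g + g * X f)
    (hY : ∀ f g : M → ℝ, Y (f * g) = f * Y g + g * Y f)
    (hZ : ∀ f g : M → ℝ, Z (f * g) = f * Z g + g * Z f)
    (hXY : ∀ f : M → ℝ, X (Y f) - Y (X f) = Z f)
    (hXZ : ∀ f : M → ℝ, X (Z f) - Z (X f) = -ρ₁ • Y f)
    (hYZ : ∀ f : M → ℝ, Y (Z f) - Z (Y f) = ρ₁ • X f)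
    (f : M → ℝ) :
    X f * X (Z f * Z f) + Y f * Y (Z f * Z f) =
      Z f * Z (X f * X f + Y f * Y f) :=
  gamma_gammaZ_commute_general ρ₁ X Y Z hX hY hZ hXZ hYZ f
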